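/- arXiv:1602.02199 — 2 statements merged into one kernel-verified Lean document; each statement's English description precedes it below -/
import Mathlib

section
/- Suppose that Q^(s) − B^(t) is invertible for all integers s, t ≥ 1. Fix integers i, j ≥ 1 and define an auxiliary sequence by (Â^(1), B̂^(1), Q̂^(1)) = (A^(i), B^(i), Q^(i)) and, for k > 1, Â^(k) = A^(j)(Q^(j) − B̂^(k−1))^{-1} Â^(k−1), B̂^(k) = B^(j) + A^(j)(Q^(j) − B̂^(k−1))^{-1}(A^(j))^H, Q̂^(k) = Q̂^(k−1) − (Â^(k−1))^H (Q^(j) − B̂^(k−1))^{-1} Â^(k−1), assuming each Q^(j) − B̂^(k−1) is invertible. Then for every k ≥ 1 one has (Â^(k), B̂^(k), Q̂^(k)) = (A^(i+(k−1)j), B^(i+(k−1)j), Q^(i+(k−1)j)). -/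
open Matrix Filter Topology
open scoped ComplexOrder

noncomputable section

/-- Square complex matrices of size `n`. -/
abbrev Mat (n : ℕ) := Matrix (Fin n) (Fin n) ℂ

/-- An operator `f` on complex `n × n` matrices is *admissible* if it satisfies
(a1) `f (f X) = X`, (a2) additivity, (a3) multiplicativity, and
(a4) `f X` is positive semidefinite whenever `X` is. -/
def Admissible {n : ℕ} (f : Mat n → Mat n) : Prop :=
  (∀ X, f (f X) = X) ∧
  (∀ X Y, f (X + Y) = f X + f Y) ∧
  (∀ X Y, f (X * Y) = f X * f Y) ∧
  (∀ X, X.PosSemidef → (f X).PosSemidef)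

/-- The general recursion of the paper: with constant matrices `(Ac, Bc, Qc)` and
initial triple `init = (A⁽¹⁾, B⁽¹⁾, Q⁽¹⁾)`, step
`(A, B, Q) ↦ (Ac (Qc - B)⁻¹ A, Bc + Ac (Qc - B)⁻¹ Acᴴ, Q - Aᴴ (Qc - B)⁻¹ A)`.
Index `k : ℕ` corresponds to the paper's index `k + 1`. -/
def nmeIter {n : ℕ} (Ac Bc Qc : Mat n) (init : Mat n × Mat n × Mat n) :
    ℕ → Mat n × Mat n × Mat n
  | 0 => init
  | k + 1 =>
    let p := nmeIter Ac Bc Qc init k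
    (Ac * (Qc - p.2.1)⁻¹ * p.1,
     Bc + Ac * (Qc - p.2.1)⁻¹ * Acᴴ,
     p.2.2 - p.1ᴴ * (Qc - p.2.1)⁻¹ * p.1)

/-- The sequence `(A⁽ᵏ⁾, B⁽ᵏ⁾, Q⁽ᵏ⁾)` (indexed from `0`, so `plusSeq f A Q k` is the
paper's `(A^{(k+1)}, B^{(k+1)}, Q^{(k+1)})`) for the plus-sign equation
`X + Aᴴ f(X)⁻¹ A = Q`. -/
def plusSeq {n : ℕ} (f : Mat n → Mat n) (A Q : Mat n) : ℕ → Mat n × Mat n × Mat n :=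
  nmeIter (f A * (f Q)⁻¹ * A) (f A * (f Q)⁻¹ * (f A)ᴴ) (Q - Aᴴ * (f Q)⁻¹ * A)
    (f A * (f Q)⁻¹ * A, f A * (f Q)⁻¹ * (f A)ᴴ, Q - Aᴴ * (f Q)⁻¹ * A)

/-- `As f A Q k` is the paper's `A^{(k+1)}`. -/
def As {n : ℕ} (f : Mat n → Mat n) (A Q : Mat n) (k : ℕ) : Mat n := (plusSeq f A Q k).1
/-- `Bs f A Q k` is the paper's `B^{(k+1)}`. -/
def Bs {n : ℕ} (f : Mat n → Mat n) (A Q : Mat n) (k : ℕ) : Mat n := (plusSeq f A Q k).2.1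
/-- `Qs f A Q k` is the paper's `Q^{(k+1)}`. -/
def Qs {n : ℕ} (f : Mat n → Mat n) (A Q : Mat n) (k : ℕ) : Mat n := (plusSeq f A Q k).2.2


lemma mul_cancel_lr {n : ℕ} {M N X Y : Mat n} (hM : IsUnit M) (hN : IsUnit N)
    (h : M * X * N = M * Y * N) : X = Y := by
  have hM' := M.isUnit_iff_isUnit_det.mp hM
  have hN' := N.isUnit_iff_isUnit_det.mp hN
  have h2 := congrArg (fun Z => M⁻¹ * Z * N⁻¹) h
  simp only [← Matrix.mul_assoc, Matrix.nonsing_inv_mul _ hM', Matrix.one_mul] at h2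
  simpa [Matrix.mul_assoc, Matrix.mul_nonsing_inv _ hN'] using h2

/-- Woodbury-type identity 1. -/
lemma wood1 {n : ℕ} (S V U W : Mat n) (hS : IsUnit S) (hV : IsUnit V)
    (hM : IsUnit (S - U * V⁻¹ * W)) (hN : IsUnit (V - W * S⁻¹ * U)) :
    (S - U * V⁻¹ * W)⁻¹ * (U * V⁻¹) = S⁻¹ * U * (V - W * S⁻¹ * U)⁻¹ := by
  set M := S - U * V⁻¹ * W with hMdef
  set N := V - W * S⁻¹ * U with hNdef
  have hS' := S.isUnit_iff_isUnit_det.mp hS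
  have hV' := V.isUnit_iff_isUnit_det.mp hV
  have hM' := M.isUnit_iff_isUnit_det.mp hM
  have hN' := N.isUnit_iff_isUnit_det.mp hN
  refine mul_cancel_lr hM hN ?_
  have e1 : M * (M⁻¹ * (U * V⁻¹)) * N = U * V⁻¹ * N := by
    rw [← Matrix.mul_assoc, Matrix.mul_nonsing_inv _ hM', Matrix.one_mul]
  have e2 : M * (S⁻¹ * U * N⁻¹) * N = M * (S⁻¹ * U) := by
    rw [Matrix.mul_assoc M, Matrix.mul_assoc, Matrix.nonsing_inv_mul _ hN', Matrix.mul_one,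
      ← Matrix.mul_assoc]
  rw [e1, e2, hMdef, hNdef]
  simp only [Matrix.sub_mul, Matrix.mul_sub, Matrix.mul_assoc,
    Matrix.nonsing_inv_mul _ hV', Matrix.mul_nonsing_inv _ hS', Matrix.mul_one,
    Matrix.one_mul]
  rw [← Matrix.mul_assoc S S⁻¹, Matrix.mul_nonsing_inv _ hS', Matrix.one_mul]

/-- Woodbury identity. -/
lemma wood2 {n : ℕ} (S V U W : Mat n) (hS : IsUnit S) (hV : IsUnit V)
    (hM : IsUnit (S - U * V⁻¹ * W)) (hN : IsUnit (V - W * S⁻¹ * U)) :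
    (S - U * V⁻¹ * W)⁻¹ = S⁻¹ + S⁻¹ * U * (V - W * S⁻¹ * U)⁻¹ * (W * S⁻¹) := by
  set M := S - U * V⁻¹ * W with hMdef
  set N := V - W * S⁻¹ * U with hNdef
  have hS' := S.isUnit_iff_isUnit_det.mp hS
  have hM' := M.isUnit_iff_isUnit_det.mp hM
  have key : M⁻¹ * S = 1 + M⁻¹ * (U * V⁻¹) * (W) := by
    have : M⁻¹ * S = M⁻¹ * (M + U * V⁻¹ * W) := by rw [hMdef]; congr 1; abel
    rw [this, Matrix.mul_add, Matrix.nonsing_inv_mul _ hM', ← Matrix.mul_assoc]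
  have := congrArg (fun Z => Z * S⁻¹) key
  simp only [Matrix.mul_assoc, Matrix.mul_nonsing_inv _ hS', Matrix.mul_one,
    Matrix.add_mul, Matrix.one_mul] at this
  rw [this]
  have w1 := wood1 S V U W hS hV hM hN
  rw [← hMdef, ← hNdef] at w1
  have e : M⁻¹ * (U * (V⁻¹ * (W * S⁻¹))) = M⁻¹ * (U * V⁻¹) * (W * S⁻¹) := by
    simp [Matrix.mul_assoc]
  rw [e, w1]

variable {n : ℕ} (f : Mat n → Mat n) (A Q : Mat n)

lemma As_succ (k : ℕ) : As f A Q (k+1)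
    = As f A Q 0 * (Qs f A Q 0 - Bs f A Q k)⁻¹ * As f A Q k := rfl
lemma Bs_succ (k : ℕ) : Bs f A Q (k+1)
    = Bs f A Q 0 + As f A Q 0 * (Qs f A Q 0 - Bs f A Q k)⁻¹ * (As f A Q 0)ᴴ := rfl
lemma Qs_succ (k : ℕ) : Qs f A Q (k+1)
    = Qs f A Q k - (As f A Q k)ᴴ * (Qs f A Q 0 - Bs f A Q k)⁻¹ * As f A Q k := rfl

lemma herm (hf : Admissible f) (hQ : Q.PosDef) :
    ∀ k, (Bs f A Q k).IsHermitian ∧ (Qs f A Q k).IsHermitian := by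
  have hfQ : ((f Q)⁻¹).IsHermitian := (hf.2.2.2 Q hQ.posSemidef).1.inv
  have hB0 : (Bs f A Q 0).IsHermitian := by
    show (f A * (f Q)⁻¹ * (f A)ᴴ).IsHermitian
    exact isHermitian_mul_mul_conjTranspose _ hfQ
  have hQ0 : (Qs f A Q 0).IsHermitian := by
    show (Q - Aᴴ * (f Q)⁻¹ * A).IsHermitian
    exact hQ.1.sub (isHermitian_conjTranspose_mul_mul _ hfQ)
  intro k
  induction k with
  | zero => exact ⟨hB0, hQ0⟩
  | succ k ih =>
    have hi : ((Qs f A Q 0 - Bs f A Q k)⁻¹).IsHermitian := (hQ0.sub ih.1).inv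
    refine ⟨?_, ?_⟩
    · rw [Bs_succ]
      exact hB0.add (isHermitian_mul_mul_conjTranspose _ hi)
    · rw [Qs_succ]
      exact ih.2.sub (isHermitian_conjTranspose_mul_mul _ hi)

lemma step_shift (hf : Admissible f) (hQ : Q.PosDef)
    (hinv : ∀ s t, IsUnit (Qs f A Q s - Bs f A Q t)) :
    ∀ j m : ℕ,
      (As f A Q j * (Qs f A Q j - (plusSeq f A Q m).2.1)⁻¹ * (plusSeq f A Q m).1,
       Bs f A Q j + As f A Q j * (Qs f A Q j - (plusSeq f A Q m).2.1)⁻¹ * (As f A Q j)ᴴ,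
       (plusSeq f A Q m).2.2 -
         (plusSeq f A Q m).1ᴴ * (Qs f A Q j - (plusSeq f A Q m).2.1)⁻¹ * (plusSeq f A Q m).1)
      = plusSeq f A Q (m + j + 1) := by
  intro j
  induction j with
  | zero => intro m; rfl
  | succ j ih =>
    intro m
    -- notation
    have hS : IsUnit (Qs f A Q 0 - Bs f A Q j) := hinv 0 j
    have hV : IsUnit (Qs f A Q j - Bs f A Q m) := hinv j m
    have hSherm : (Qs f A Q 0 - Bs f A Q j).IsHermitian :=
      ((herm f A Q hf hQ 0).2).sub (herm f A Q hf hQ j).1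
    have hVherm : (Qs f A Q j - Bs f A Q m).IsHermitian :=
      ((herm f A Q hf hQ j).2).sub (herm f A Q hf hQ m).1
    have ihm := ih m
    have hA' : As f A Q (m+j+1)
        = As f A Q j * (Qs f A Q j - Bs f A Q m)⁻¹ * As f A Q m := by
      rw [As, ← ihm]; rfl
    have hB' : Bs f A Q (m+j+1)
        = Bs f A Q j + As f A Q j * (Qs f A Q j - Bs f A Q m)⁻¹ * (As f A Q j)ᴴ := by
      rw [Bs, ← ihm]; rfl
    have hQ' : Qs f A Q (m+j+1)
        = Qs f A Q m - (As f A Q m)ᴴ * (Qs f A Q j - Bs f A Q m)⁻¹ * As f A Q m := by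
      rw [Qs, ← ihm]; rfl
    have hM : IsUnit (Qs f A Q 0 - Bs f A Q j
        - As f A Q j * (Qs f A Q j - Bs f A Q m)⁻¹ * (As f A Q j)ᴴ) := by
      have h := hinv 0 (m+j+1)
      rwa [hB', sub_add_eq_sub_sub] at h
    have hN : IsUnit (Qs f A Q j - Bs f A Q m
        - (As f A Q j)ᴴ * (Qs f A Q 0 - Bs f A Q j)⁻¹ * As f A Q j) := by
      have h := hinv (j+1) m
      rwa [Qs_succ f A Q j, sub_right_comm] at h
    have w1 := wood1 _ _ _ _ hS hV hM hN
    have w2 := wood2 _ _ _ _ hS hV hM hN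
    have w2' := wood2 (Qs f A Q j - Bs f A Q m) (Qs f A Q 0 - Bs f A Q j)
      (As f A Q j)ᴴ (As f A Q j) hV hS hN hM
    have harith : m + (j+1) + 1 = (m + j + 1) + 1 := by omega
    rw [harith]
    refine Prod.ext ?_ (Prod.ext ?_ ?_)
    · -- A component
      show As f A Q (j+1) * (Qs f A Q (j+1) - Bs f A Q m)⁻¹ * As f A Q m
          = As f A Q ((m+j+1)+1)
      rw [As_succ f A Q (m+j+1), As_succ f A Q j, Qs_succ f A Q j, sub_right_comm, hB', hA', sub_add_eq_sub_sub]
      calc As f A Q 0 * (Qs f A Q 0 - Bs f A Q j)⁻¹ * As f A Q j *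
            (Qs f A Q j - Bs f A Q m - (As f A Q j)ᴴ * (Qs f A Q 0 - Bs f A Q j)⁻¹ * As f A Q j)⁻¹ *
            As f A Q m
          = As f A Q 0 * ((Qs f A Q 0 - Bs f A Q j)⁻¹ * As f A Q j *
            (Qs f A Q j - Bs f A Q m - (As f A Q j)ᴴ * (Qs f A Q 0 - Bs f A Q j)⁻¹ * As f A Q j)⁻¹) *
            As f A Q m := by simp only [Matrix.mul_assoc]
        _ = As f A Q 0 * ((Qs f A Q 0 - Bs f A Q j
              - As f A Q j * (Qs f A Q j - Bs f A Q m)⁻¹ * (As f A Q j)ᴴ)⁻¹ *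
              (As f A Q j * (Qs f A Q j - Bs f A Q m)⁻¹)) * As f A Q m := by rw [w1]
        _ = _ := by simp only [Matrix.mul_assoc]
    · -- B component
      show Bs f A Q (j+1) + As f A Q (j+1) * (Qs f A Q (j+1) - Bs f A Q m)⁻¹ * (As f A Q (j+1))ᴴ
          = Bs f A Q ((m+j+1)+1)
      rw [Bs_succ f A Q (m+j+1), hB', sub_add_eq_sub_sub, w2,
        Bs_succ f A Q j, As_succ f A Q j, Qs_succ f A Q j, sub_right_comm,
        Matrix.conjTranspose_mul, Matrix.conjTranspose_mul, Matrix.conjTranspose_nonsing_inv,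
        hSherm.eq]
      simp only [Matrix.mul_add, Matrix.add_mul, Matrix.mul_assoc, add_assoc]
    · -- Q component
      show (plusSeq f A Q m).2.2
          - (plusSeq f A Q m).1ᴴ * (Qs f A Q (j+1) - Bs f A Q m)⁻¹ * (plusSeq f A Q m).1
          = Qs f A Q ((m+j+1)+1)
      rw [Qs_succ f A Q (m+j+1), hQ', hA', hB', sub_add_eq_sub_sub,
        Qs_succ f A Q j, sub_right_comm, w2',
        Matrix.conjTranspose_mul, Matrix.conjTranspose_mul, Matrix.conjTranspose_nonsing_inv,
        hVherm.eq]
      simp only [Matrix.mul_add, Matrix.add_mul, Matrix.mul_assoc, sub_sub, add_assoc]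
      rfl

/-- the auxiliary sequence started at `(A^{(i)}, B^{(i)}, Q^{(i)})` and iterated
with the constant matrices `(A^{(j)}, B^{(j)}, Q^{(j)})` reproduces
`(A^{(i+(k-1)j)}, B^{(i+(k-1)j)}, Q^{(i+(k-1)j)})`.  In the `0`-based indexing used here
(`plusSeq … k` = paper index `k + 1`) this reads
`nmeIter … k = plusSeq f A Q (i + k * (j + 1))`. -/
theorem stmt_3 {n : ℕ} (f : Mat n → Mat n) (hf : Admissible f)
    (A Q : Mat n) (hQ : Q.PosDef)
    (hinv : ∀ s t, IsUnit (Qs f A Q s - Bs f A Q t)) (i j : ℕ)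
    (hinv2 : ∀ k, IsUnit (Qs f A Q j -
      (nmeIter (As f A Q j) (Bs f A Q j) (Qs f A Q j) (plusSeq f A Q i) k).2.1)) :
    ∀ k : ℕ,
      nmeIter (As f A Q j) (Bs f A Q j) (Qs f A Q j) (plusSeq f A Q i) k =
        plusSeq f A Q (i + k * (j + 1)) := by
  intro k
  induction k with
  | zero => rw [show i + 0 * (j + 1) = i by ring]; rfl
  | succ k ih =>
    have harith : i + (k+1)*(j+1) = (i + k*(j+1)) + j + 1 := by ring
    rw [harith, ← step_shift f A Q hf hQ hinv j (i + k*(j+1)), ← ih]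
    rfl
end
end

section
/- The sequences (A^(k), B^(k), Q^(k)) for the minus-sign equation are well defined (in particular Q^(1) − B^(k) is positive definite for every k), and for every Hermitian positive definite solution X_K of X − A^H f(X)^{-1} A = Q and every k ≥ 1: B^(k) ≤ B^(k+1) ≤ 0 < Q ≤ X_K ≤ Q^(k+1) ≤ Q^(k) in the Loewner order. -/
open Matrix Filter Topology
open scoped ComplexOrder

noncomputable section

/-- The sequence `(A⁽ᵏ⁾, B⁽ᵏ⁾, Q⁽ᵏ⁾)` (indexed from `0`) for the minus-sign equation
`X - Aᴴ f(X)⁻¹ A = Q`. -/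
def minusSeq {n : ℕ} (f : Mat n → Mat n) (A Q : Mat n) : ℕ → Mat n × Mat n × Mat n :=
  nmeIter (f A * (f Q)⁻¹ * A) (-(f A * (f Q)⁻¹ * (f A)ᴴ)) (Q + Aᴴ * (f Q)⁻¹ * A)
    (f A * (f Q)⁻¹ * A, -(f A * (f Q)⁻¹ * (f A)ᴴ), Q + Aᴴ * (f Q)⁻¹ * A)

/-- `mAs f A Q k` is the paper's `A^{(k+1)}` (minus-sign equation). -/
def mAs {n : ℕ} (f : Mat n → Mat n) (A Q : Mat n) (k : ℕ) : Mat n := (minusSeq f A Q k).1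
/-- `mBs f A Q k` is the paper's `B^{(k+1)}` (minus-sign equation). -/
def mBs {n : ℕ} (f : Mat n → Mat n) (A Q : Mat n) (k : ℕ) : Mat n := (minusSeq f A Q k).2.1
/-- `mQs f A Q k` is the paper's `Q^{(k+1)}` (minus-sign equation). -/
def mQs {n : ℕ} (f : Mat n → Mat n) (A Q : Mat n) (k : ℕ) : Mat n := (minusSeq f A Q k).2.2

/-!
An admissible `f` is an involutive ring automorphism of `Mat n` preserving positivity. It
therefore preserves Hermitian matrices (differences of positive ones) and sends `I • 1` to a
central square root of `-1`, i.e. to `± I • 1`; hence `f` commutes with `ᴴ` and with inversion.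

Write `D_k = Q⁽¹⁾ - B⁽ᵏ⁾` and `M = f(A) f(Q)⁻¹`. Then
`-B⁽ᵏ⁺¹⁾ = M (f(Q) - A D_k⁻¹ Aᴴ) Mᴴ`, and by the Schur complement criterion for
`[[f(Q), A], [Aᴴ, D_k]]` this is `≥ 0` as soon as `D_k - Aᴴ f(Q)⁻¹ A = Q - B⁽ᵏ⁾ ≥ 0`; so `B⁽ᵏ⁾ ≤ 0`
by induction. Monotonicity of `B` and `Q` follows from antitonicity of inversion on positive
definite matrices.

For a solution `X`, applying `f` to the equation and the Woodbury identity give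
`X = Q⁽¹⁾ - A⁽¹⁾ᴴ (X - B⁽¹⁾)⁻¹ A⁽¹⁾`, and Woodbury again propagates this to
`X = Q⁽ᵏ⁾ - A⁽ᵏ⁾ᴴ (X - B⁽ᵏ⁾)⁻¹ A⁽ᵏ⁾` for all `k`, whence `X ≤ Q⁽ᵏ⁾`.
-/

namespace Matrix

variable {m n 𝕜 : Type*} [Fintype m] [Fintype n] [DecidableEq m] [DecidableEq n] [RCLike 𝕜]

theorem posSemidef_sub_conjTranspose_mul_inv_mul_iff {W : Matrix m m 𝕜} {D : Matrix n n 𝕜}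
    (hW : W.PosDef) (hD : D.PosDef) (A : Matrix m n 𝕜) :
    (D - Aᴴ * W⁻¹ * A).PosSemidef ↔ (W - A * D⁻¹ * Aᴴ).PosSemidef := by
  let := hW.isUnit.invertible
  let := hD.isUnit.invertible
  rw [← PosDef.fromBlocks₁₁ A D hW, PosDef.fromBlocks₂₂ W A hD]

theorem posSemidef_mul_inv_mul_conjTranspose_sub {W : Matrix m m 𝕜} {D : Matrix n n 𝕜}
    (hW : W.PosDef) (hD : D.PosDef) (G : Matrix m m 𝕜) (A : Matrix m n 𝕜)
    (h : (D - Aᴴ * W⁻¹ * A).PosSemidef) :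
    (G * W⁻¹ * Gᴴ - G * W⁻¹ * A * D⁻¹ * (G * W⁻¹ * A)ᴴ).PosSemidef := by
  have e : G * W⁻¹ * Gᴴ - G * W⁻¹ * A * D⁻¹ * (G * W⁻¹ * A)ᴴ
      = G * W⁻¹ * (W - A * D⁻¹ * Aᴴ) * (G * W⁻¹)ᴴ := by
    simp only [conjTranspose_mul, hW.inv.isHermitian.eq, Matrix.mul_sub, Matrix.sub_mul,
      ← Matrix.mul_assoc, nonsing_inv_mul_cancel_right _ _ ((isUnit_iff_isUnit_det W).1 hW.isUnit)]
  rw [e]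
  exact ((posSemidef_sub_conjTranspose_mul_inv_mul_iff hW hD A).1 h).mul_mul_conjTranspose_same _

omit [Fintype n] [DecidableEq n] in
theorem PosDef.of_posSemidef_sub {X Y : Matrix n n 𝕜} (hY : Y.PosDef) (h : (X - Y).PosSemidef) :
    X.PosDef :=
  add_sub_cancel Y X ▸ hY.add_posSemidef h

theorem PosDef.posSemidef_inv_sub_inv {X Y : Matrix n n 𝕜} (hY : Y.PosDef)
    (h : (X - Y).PosSemidef) : (Y⁻¹ - X⁻¹).PosSemidef := by
  have hYY : Y⁻¹⁻¹ = Y := nonsing_inv_nonsing_inv Y ((isUnit_iff_isUnit_det Y).1 hY.isUnit)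
  simpa using (posSemidef_sub_conjTranspose_mul_inv_mul_iff hY.inv (hY.of_posSemidef_sub h) 1).1
    (by simpa [hYY] using h)

theorem inv_neg_of_isUnit {M : Matrix n n 𝕜} (hM : IsUnit M) : (-M)⁻¹ = -M⁻¹ :=
  inv_eq_left_inv <| by rw [neg_mul_neg, nonsing_inv_mul M ((isUnit_iff_isUnit_det M).1 hM)]

theorem sub_mul_inv_mul_inv_eq_add (D : Matrix n n 𝕜) (U : Matrix n m 𝕜) (W : Matrix m m 𝕜)
    (V : Matrix m n 𝕜) (hD : IsUnit D) (hW : IsUnit W) (hDW : IsUnit (W - V * D⁻¹ * U)) :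
    (D - U * W⁻¹ * V)⁻¹ = D⁻¹ + D⁻¹ * U * (W - V * D⁻¹ * U)⁻¹ * V * D⁻¹ := by
  have hWinv : IsUnit W⁻¹ := isUnit_nonsing_inv_iff.2 hW
  have hW' : (-W⁻¹)⁻¹ = -W := by
    rw [inv_neg_of_isUnit hWinv, nonsing_inv_nonsing_inv W ((isUnit_iff_isUnit_det W).1 hW)]
  have hsum : -W + V * D⁻¹ * U = -(W - V * D⁻¹ * U) := by abel
  have := add_mul_mul_inv_eq_sub D U (-W⁻¹) V hD hWinv.neg (by rw [hW', hsum]; exact hDW.neg)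
  rw [hW', hsum, inv_neg_of_isUnit hDW] at this
  simpa [sub_eq_add_neg] using this

end Matrix

theorem Complex.conj_eq_neg_of_mul_self_eq_neg_one {c : ℂ} (hc : c * c = -1) : star c = -c := by
  have : (c - Complex.I) * (c + Complex.I) = 0 := by linear_combination hc - Complex.I_mul_I
  rcases mul_eq_zero.1 this with h | h
  · simp [sub_eq_zero.1 h]
  · simp [eq_neg_of_add_eq_zero_left h]

namespace Admissible

variable {n : ℕ} {f : Mat n → Mat n}

theorem map_map (hf : Admissible f) (X : Mat n) : f (f X) = X := hf.1 X

theorem map_add (hf : Admissible f) (X Y : Mat n) : f (X + Y) = f X + f Y := hf.2.1 X Y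

theorem map_mul (hf : Admissible f) (X Y : Mat n) : f (X * Y) = f X * f Y := hf.2.2.1 X Y

theorem posSemidef (hf : Admissible f) {X : Mat n} (hX : X.PosSemidef) : (f X).PosSemidef :=
  hf.2.2.2 X hX

def ringEquiv (hf : Admissible f) : Mat n ≃+* Mat n where
  toFun := f
  invFun := f
  left_inv := hf.map_map
  right_inv := hf.map_map
  map_mul' := hf.map_mul
  map_add' := hf.map_add

theorem ringEquiv_apply (hf : Admissible f) (X : Mat n) : hf.ringEquiv X = f X := rfl

theorem map_sub (hf : Admissible f) (X Y : Mat n) : f (X - Y) = f X - f Y :=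
  _root_.map_sub hf.ringEquiv X Y

theorem map_neg (hf : Admissible f) (X : Mat n) : f (-X) = -f X :=
  _root_.map_neg hf.ringEquiv X

theorem map_one (hf : Admissible f) : f 1 = 1 :=
  _root_.map_one hf.ringEquiv

theorem map_inv (hf : Admissible f) (X : Mat n) : f X⁻¹ = (f X)⁻¹ := by
  by_cases hX : IsUnit X
  · refine (inv_eq_right_inv ?_).symm
    rw [← hf.map_mul, mul_nonsing_inv X ((isUnit_iff_isUnit_det X).1 hX), hf.map_one]
  · have hfX : ¬IsUnit (f X) := fun h => hX <| by
      simpa [ringEquiv_apply, hf.map_map] using h.map hf.ringEquiv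
    rw [isUnit_iff_isUnit_det] at hX hfX
    rw [nonsing_inv_apply_not_isUnit _ hX, nonsing_inv_apply_not_isUnit _ hfX,
      ← ringEquiv_apply hf, _root_.map_zero]

theorem posDef (hf : Admissible f) {X : Mat n} (hX : X.PosDef) : (f X).PosDef :=
  (hf.posSemidef hX.posSemidef).posDef_iff_isUnit.2 (hX.isUnit.map hf.ringEquiv)

open scoped MatrixOrder in
theorem isHermitian (hf : Admissible f) {X : Mat n} (hX : X.IsHermitian) :
    (f X).IsHermitian := by
  rw [← CFC.posPart_sub_negPart X hX.isSelfAdjoint, hf.map_sub]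
  exact (hf.posSemidef (CFC.posPart_nonneg X).posSemidef).isHermitian.sub
    (hf.posSemidef (CFC.negPart_nonneg X).posSemidef).isHermitian

theorem commute_map_I_smul_one (hf : Admissible f) (M : Mat n) :
    Commute (f (Complex.I • 1)) M := by
  rw [← hf.map_map M, Commute, SemiconjBy, ← hf.map_mul, ← hf.map_mul, smul_one_mul,
    mul_smul_one]

theorem conjTranspose_map_I_smul_one (hf : Admissible f) :
    (f (Complex.I • 1))ᴴ = -f (Complex.I • 1) := by
  cases isEmpty_or_nonempty (Fin n)
  · exact Subsingleton.elim _ _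
  obtain ⟨c, hc⟩ : f (Complex.I • 1) ∈ Set.range (scalar (Fin n)) := by
    rw [← center_eq_range, Semigroup.mem_center_iff]
    exact fun M => (hf.commute_map_I_smul_one M).eq.symm
  have hsq : c * c = -1 := by
    rw [← scalar_inj (n := Fin n), _root_.map_mul, hc, ← hf.map_mul, smul_one_mul, smul_smul,
      Complex.I_mul_I, neg_one_smul, hf.map_neg, hf.map_one, _root_.map_neg, _root_.map_one]
  have hc' := Complex.conj_eq_neg_of_mul_self_eq_neg_one hsq
  ext i j
  rw [← hc]
  by_cases hij : i = j <;> simp [scalar_apply, hij, eq_comm, hc']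

theorem map_conjTranspose (hf : Admissible f) (X : Mat n) : f Xᴴ = (f X)ᴴ := by
  set R : Mat n := (realPart X : Mat n)
  set J : Mat n := (imaginaryPart X : Mat n)
  have hR : R.IsHermitian := (realPart X).2
  have hJ : J.IsHermitian := (imaginaryPart X).2
  have hX : X = R + (Complex.I • 1) * J := by
    rw [smul_one_mul]; exact (realPart_add_I_smul_imaginaryPart X).symm
  have hXH : Xᴴ = R - (Complex.I • 1) * J := by
    conv_lhs => rw [hX]
    simp [hR.eq, hJ.eq, sub_eq_add_neg]
  rw [hXH, hX, hf.map_sub, hf.map_add, hf.map_mul, conjTranspose_add, conjTranspose_mul,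
    (hf.isHermitian hR).eq, (hf.isHermitian hJ).eq, hf.conjTranspose_map_I_smul_one, mul_neg,
    ← (hf.commute_map_I_smul_one _).eq, sub_eq_add_neg]

end Admissible

section MinusSeq

variable {n : ℕ} {f : Mat n → Mat n} {A Q : Mat n}

theorem mAs_zero : mAs f A Q 0 = f A * (f Q)⁻¹ * A := rfl

theorem mBs_zero : mBs f A Q 0 = -(f A * (f Q)⁻¹ * (f A)ᴴ) := rfl

theorem mQs_zero : mQs f A Q 0 = Q + Aᴴ * (f Q)⁻¹ * A := rfl

theorem mAs_succ (k : ℕ) :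
    mAs f A Q (k + 1) = mAs f A Q 0 * (mQs f A Q 0 - mBs f A Q k)⁻¹ * mAs f A Q k := rfl

theorem mBs_succ (k : ℕ) :
    mBs f A Q (k + 1) =
      mBs f A Q 0 + mAs f A Q 0 * (mQs f A Q 0 - mBs f A Q k)⁻¹ * (mAs f A Q 0)ᴴ :=
  rfl

theorem mQs_succ (k : ℕ) :
    mQs f A Q (k + 1) =
      mQs f A Q k - (mAs f A Q k)ᴴ * (mQs f A Q 0 - mBs f A Q k)⁻¹ * mAs f A Q k :=
  rfl

theorem mQs_zero_posDef (hQ : Q.PosDef) (hfQ : (f Q).PosDef) : (mQs f A Q 0).PosDef :=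
  hQ.add_posSemidef (hfQ.inv.posSemidef.conjTranspose_mul_mul_same A)

theorem neg_mBs_posSemidef (hQ : Q.PosDef) (hfQ : (f Q).PosDef) :
    ∀ k, (-mBs f A Q k).PosSemidef
  | 0 => by
    rw [mBs_zero, neg_neg]
    exact hfQ.inv.posSemidef.mul_mul_conjTranspose_same (f A)
  | k + 1 => by
    have hB := neg_mBs_posSemidef hQ hfQ k
    have hD : (mQs f A Q 0 - mBs f A Q k).PosDef :=
      (mQs_zero_posDef hQ hfQ).of_posSemidef_sub (by rwa [sub_sub_cancel_left])
    rw [mBs_succ, mBs_zero, mAs_zero, neg_add, neg_neg, ← sub_eq_add_neg]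
    refine posSemidef_mul_inv_mul_conjTranspose_sub hfQ hD (f A) A ?_
    rw [mQs_zero, sub_right_comm, add_sub_cancel_right, sub_eq_add_neg]
    exact hQ.posSemidef.add hB

theorem mQs_zero_sub_mBs_posDef (hQ : Q.PosDef) (hfQ : (f Q).PosDef) (k : ℕ) :
    (mQs f A Q 0 - mBs f A Q k).PosDef :=
  (mQs_zero_posDef hQ hfQ).of_posSemidef_sub
    (by rw [sub_sub_cancel_left]; exact neg_mBs_posSemidef hQ hfQ k)

theorem mBs_succ_sub_mBs_succ (j k : ℕ) :
    mBs f A Q (j + 1) - mBs f A Q (k + 1) = mAs f A Q 0 *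
      ((mQs f A Q 0 - mBs f A Q j)⁻¹ - (mQs f A Q 0 - mBs f A Q k)⁻¹) * (mAs f A Q 0)ᴴ := by
  rw [mBs_succ, mBs_succ, mul_sub, sub_mul, add_sub_add_left_eq_sub]

theorem mBs_succ_sub_posSemidef (hQ : Q.PosDef) (hfQ : (f Q).PosDef) :
    ∀ k, (mBs f A Q (k + 1) - mBs f A Q k).PosSemidef
  | 0 => by
    rw [mBs_succ, add_sub_cancel_left]
    exact (mQs_zero_sub_mBs_posDef hQ hfQ 0).inv.posSemidef.mul_mul_conjTranspose_same _
  | k + 1 => by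
    rw [mBs_succ_sub_mBs_succ]
    refine PosSemidef.mul_mul_conjTranspose_same ?_ _
    refine (mQs_zero_sub_mBs_posDef hQ hfQ (k + 1)).posSemidef_inv_sub_inv ?_
    rw [sub_sub_sub_cancel_left]
    exact mBs_succ_sub_posSemidef hQ hfQ k

theorem mQs_sub_mQs_succ_posSemidef (hQ : Q.PosDef) (hfQ : (f Q).PosDef) (k : ℕ) :
    (mQs f A Q k - mQs f A Q (k + 1)).PosSemidef := by
  rw [mQs_succ, sub_sub_cancel]
  exact (mQs_zero_sub_mBs_posDef hQ hfQ k).inv.posSemidef.conjTranspose_mul_mul_same _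

end MinusSeq

section Solution

variable {n : ℕ} {f : Mat n → Mat n} {A Q Y : Mat n}

theorem Admissible.map_solution (hf : Admissible f) (hsol : Y - Aᴴ * (f Y)⁻¹ * A = Q) :
    f Y = f Q + (f A)ᴴ * Y⁻¹ * f A := by
  rw [← hsol, hf.map_sub, hf.map_mul, hf.map_mul, hf.map_conjTranspose, hf.map_inv, hf.map_map,
    sub_add_cancel]

theorem solution_sub_posSemidef (hf : Admissible f) (hY : Y.PosDef)
    (hsol : Y - Aᴴ * (f Y)⁻¹ * A = Q) : (Y - Q).PosSemidef := by
  rw [← hsol, sub_sub_cancel]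
  exact (hf.posDef hY).inv.posSemidef.conjTranspose_mul_mul_same A

theorem sub_mBs_posDef (hQ : Q.PosDef) (hfQ : (f Q).PosDef) (hY : Y.PosDef) (k : ℕ) :
    (Y - mBs f A Q k).PosDef :=
  sub_eq_add_neg Y _ ▸ hY.add_posSemidef (neg_mBs_posSemidef hQ hfQ k)

theorem solution_eq_mQs_zero_sub (hf : Admissible f) (hQ : Q.PosDef) (hY : Y.PosDef)
    (hsol : Y - Aᴴ * (f Y)⁻¹ * A = Q) :
    Y = mQs f A Q 0 - (mAs f A Q 0)ᴴ * (Y - mBs f A Q 0)⁻¹ * mAs f A Q 0 := by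
  have hfQ := hf.posDef hQ
  have hYB := sub_mBs_posDef (A := A) hQ hfQ hY 0
  have hfY : (f Y)⁻¹ = (f Q)⁻¹ - (f Q)⁻¹ * (f A)ᴴ * (Y - mBs f A Q 0)⁻¹ * f A * (f Q)⁻¹ := by
    have hYY : Y⁻¹⁻¹ = Y := nonsing_inv_nonsing_inv Y ((isUnit_iff_isUnit_det Y).1 hY.isUnit)
    rw [mBs_zero, sub_neg_eq_add] at hYB ⊢
    rw [hf.map_solution hsol, add_mul_mul_inv_eq_sub _ _ _ _ hfQ.isUnit hY.inv.isUnit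
      (by rw [hYY]; exact hYB.isUnit), hYY]
  calc Y = Q + Aᴴ * (f Y)⁻¹ * A := eq_add_of_sub_eq hsol
    _ = _ := by
      rw [hfY, mQs_zero, mAs_zero, conjTranspose_mul, conjTranspose_mul, hfQ.inv.isHermitian.eq]
      simp only [Matrix.mul_sub, Matrix.sub_mul, Matrix.mul_assoc]
      abel

theorem solution_eq_mQs_sub (hf : Admissible f) (hQ : Q.PosDef) (hY : Y.PosDef)
    (hsol : Y - Aᴴ * (f Y)⁻¹ * A = Q) :
    ∀ k, Y = mQs f A Q k - (mAs f A Q k)ᴴ * (Y - mBs f A Q k)⁻¹ * mAs f A Q k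
  | 0 => solution_eq_mQs_zero_sub hf hQ hY hsol
  | k + 1 => by
    have hfQ := hf.posDef hQ
    set C := mAs f A Q 0
    set D := mQs f A Q 0 - mBs f A Q k
    have hD : D.PosDef := mQs_zero_sub_mBs_posDef hQ hfQ k
    have hYB : Y - mBs f A Q k = D - Cᴴ * (Y - mBs f A Q 0)⁻¹ * C := by
      nth_rewrite 1 [solution_eq_mQs_zero_sub hf hQ hY hsol]
      exact sub_right_comm _ _ _
    have hYB' : Y - mBs f A Q (k + 1) = Y - mBs f A Q 0 - C * D⁻¹ * Cᴴ := by
      rw [mBs_succ, sub_add_eq_sub_sub]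
    have hinv : (Y - mBs f A Q k)⁻¹ = D⁻¹ + D⁻¹ * Cᴴ * (Y - mBs f A Q (k + 1))⁻¹ * C * D⁻¹ := by
      rw [hYB, hYB', sub_mul_inv_mul_inv_eq_add _ _ _ _ hD.isUnit
        (sub_mBs_posDef hQ hfQ hY 0).isUnit (hYB' ▸ (sub_mBs_posDef hQ hfQ hY (k + 1)).isUnit)]
    calc Y = mQs f A Q k - (mAs f A Q k)ᴴ * (Y - mBs f A Q k)⁻¹ * mAs f A Q k :=
          solution_eq_mQs_sub hf hQ hY hsol k
      _ = _ := by
        rw [hinv, mQs_succ, mAs_succ, conjTranspose_mul, conjTranspose_mul, hD.inv.isHermitian.eq]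
        simp only [Matrix.mul_add, Matrix.add_mul, Matrix.mul_assoc]
        abel

theorem mQs_sub_solution_posSemidef (hf : Admissible f) (hQ : Q.PosDef) (hY : Y.PosDef)
    (hsol : Y - Aᴴ * (f Y)⁻¹ * A = Q) (k : ℕ) : (mQs f A Q k - Y).PosSemidef := by
  rw [solution_eq_mQs_sub hf hQ hY hsol k, sub_sub_cancel]
  exact (sub_mBs_posDef hQ (hf.posDef hQ) hY k).inv.posSemidef.conjTranspose_mul_mul_same _

end Solution

/-- for the minus-sign equation the sequences are well defined
(`Q^{(1)} - B^{(k)}` is positive definite for all `k`), and for every Hermitian positive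
definite solution `X_K` of `X - Aᴴ f(X)⁻¹ A = Q` the chain
`B^{(k)} ≤ B^{(k+1)} ≤ 0 < Q ≤ X_K ≤ Q^{(k+1)} ≤ Q^{(k)}` holds. -/
theorem stmt_10 {n : ℕ} (f : Mat n → Mat n) (hf : Admissible f)
    (A Q : Mat n) (hQ : Q.PosDef) :
    (∀ k, (mQs f A Q 0 - mBs f A Q k).PosDef) ∧
    (∀ XK : Mat n, XK.PosDef → XK - Aᴴ * (f XK)⁻¹ * A = Q →
      ∀ k, (mBs f A Q (k + 1) - mBs f A Q k).PosSemidef ∧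
        (-(mBs f A Q (k + 1))).PosSemidef ∧
        Q.PosDef ∧
        (XK - Q).PosSemidef ∧
        (mQs f A Q (k + 1) - XK).PosSemidef ∧
        (mQs f A Q k - mQs f A Q (k + 1)).PosSemidef) := by
  have hfQ := hf.posDef hQ
  refine ⟨mQs_zero_sub_mBs_posDef hQ hfQ, fun XK hXK hsol k => ?_⟩
  exact ⟨mBs_succ_sub_posSemidef hQ hfQ k, neg_mBs_posSemidef hQ hfQ (k + 1), hQ,
    solution_sub_posSemidef hf hXK hsol, mQs_sub_solution_posSemidef hf hQ hXK hsol (k + 1),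
    mQs_sub_mQs_succ_posSemidef hQ hfQ k⟩
end
end
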